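/- arXiv:2411.08263 — 4 statements merged into one kernel-verified Lean document; each statement's English description precedes it below -/
import Mathlib

section
/- Under the limited-consideration (competition filter) model, if S ⊂ T are both menus in the data with c(S) ≠ c(T) and c(T) ∈ S, then for every rationalizing pair (≻, F) with F a competition filter, c(S) ≻ c(T). (That is, choosing differently in a subset than in a superset whose choice remains available reveals the subset's choice to be preferred.) -/
/-- Under limited consideration (competition filters), choosing
differently in a subset S ⊂ T while c(T) ∈ S reveals c(S) ≻ c(T) for every
rationalization. -/
theorem stmt_10 {X : Type*} [Fintype X] [DecidableEq X]
    (𝓑 : Set (Finset X)) (c : Finset X → X)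
    (F : Finset X → Finset X) (r : X → X → Prop)
    (hmem : ∀ B ∈ 𝓑, c B ∈ B)
    (hFsub : ∀ B : Finset X, F B ⊆ B)
    (hcomp : ∀ B B' : Finset X, B' ⊆ B → F B ∩ B' ⊆ F B')
    (hasym : ∀ a b, r a b → ¬ r b a)
    (htrans : Transitive r)
    (htotal : ∀ a b : X, a ≠ b → r a b ∨ r b a)
    (hrat : ∀ B ∈ 𝓑, c B ∈ F B ∧ ∀ y ∈ F B, y ≠ c B → r (c B) y)
    (S T : Finset X) (hS : S ∈ 𝓑) (hT : T ∈ 𝓑)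
    (hsub : S ⊂ T) (hne : c S ≠ c T) (hcTS : c T ∈ S) :
    r (c S) (c T) := by
  have hFS : c T ∈ F S := hcomp T S hsub.subset (Finset.mem_inter.mpr ⟨(hrat T hT).1, hcTS⟩)
  exact (hrat S hS).2 _ hFS (Ne.symm hne)
end

section
/- Under the limited-attention (attention filter) model, if menus S, T in the data satisfy T = S \ {x} for some x ∈ S and c(S) ≠ c(T), then for every rationalizing pair (≻, F) with F an attention filter, x ∈ F(S); moreover c(S) ≻ x whenever c(S) ≠ x. -/
/-- Under limited attention, if removing x from S changes choice,
then x is considered in S, and c(S) ≻ x whenever c(S) ≠ x, for every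
rationalization. -/
theorem stmt_11 {X : Type*} [Fintype X] [DecidableEq X]
    (𝓑 : Set (Finset X)) (c : Finset X → X)
    (F : Finset X → Finset X) (r : X → X → Prop)
    (hmem : ∀ B ∈ 𝓑, c B ∈ B)
    (hFsub : ∀ B : Finset X, F B ⊆ B)
    (hatt : ∀ (B : Finset X) (y : X), y ∈ B → y ∉ F B → F (B.erase y) = F B)
    (hasym : ∀ a b, r a b → ¬ r b a)
    (htrans : Transitive r)
    (htotal : ∀ a b : X, a ≠ b → r a b ∨ r b a)
    (hrat : ∀ B ∈ 𝓑, c B ∈ F B ∧ ∀ y ∈ F B, y ≠ c B → r (c B) y)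
    (S T : Finset X) (x : X) (hS : S ∈ 𝓑) (hT : T ∈ 𝓑)
    (hxS : x ∈ S) (hTS : T = S.erase x) (hne : c S ≠ c T) :
    x ∈ F S ∧ (c S ≠ x → r (c S) x) := by
  have hxF : x ∈ F S := by
    by_contra hxF
    have hFeq : F (S.erase x) = F S := hatt S x hxS hxF
    obtain ⟨hcS, hmaxS⟩ := hrat S hS
    obtain ⟨hcT, hmaxT⟩ := hrat T hT
    subst hTS; rw [hFeq] at hcT hmaxT
    exact hasym _ _ (hmaxS _ hcT (fun h => hne h.symm)) (hmaxT _ hcS hne)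
  exact ⟨hxF, fun h => (hrat S hS).2 x hxF (fun h2 => h h2.symm)⟩
end

section
/- Suppose a choice function c on all subsets of size ≥ 2 of a finite X is RSM-rationalizable: there exist an asymmetric relation ≻₀ and a strict linear order ≻ such that c(B) is the ≻-maximum of max(B, ≻₀) for all B (where max(B,≻₀) is assumed nonempty). If x is never chosen in any menu of the data, then there exists an RSM-rationalization (≻₀', ≻') of the same data in which x is the ≻'-minimum of X. (Hence nothing is revealed preferred under x.) -/
/-- If a complete data set is RSM-rationalizable and x is never
chosen, then there is an RSM-rationalization in which x is the minimum of the
second-stage preference. -/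
theorem stmt_13 {X : Type*} [Fintype X] [DecidableEq X]
    (c : Finset X → X) (r0 r : X → X → Prop)
    (hr0asym : ∀ a b, r0 a b → ¬ r0 b a)
    (hasym : ∀ a b, r a b → ¬ r b a)
    (htrans : Transitive r)
    (htotal : ∀ a b : X, a ≠ b → r a b ∨ r b a)
    (hmaxne : ∀ B : Finset X, 2 ≤ B.card → ∃ y ∈ B, ∀ z ∈ B, ¬ r0 z y)
    (hrat : ∀ B : Finset X, 2 ≤ B.card →
      c B ∈ B ∧ (∀ z ∈ B, ¬ r0 z (c B)) ∧
      ∀ y ∈ B, (∀ z ∈ B, ¬ r0 z y) → y ≠ c B → r (c B) y)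
    (x : X)
    (hnever : ∀ B : Finset X, 2 ≤ B.card → c B ≠ x) :
    ∃ (r0' r' : X → X → Prop),
      (∀ a b, r0' a b → ¬ r0' b a) ∧
      (∀ a b, r' a b → ¬ r' b a) ∧ Transitive r' ∧
      (∀ a b : X, a ≠ b → r' a b ∨ r' b a) ∧
      (∀ B : Finset X, 2 ≤ B.card → ∃ y ∈ B, ∀ z ∈ B, ¬ r0' z y) ∧
      (∀ B : Finset X, 2 ≤ B.card →
        c B ∈ B ∧ (∀ z ∈ B, ¬ r0' z (c B)) ∧
        ∀ y ∈ B, (∀ z ∈ B, ¬ r0' z y) → y ≠ c B → r' (c B) y) ∧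
      (∀ y : X, y ≠ x → r' y x) := by
  refine ⟨r0, fun a b => (b = x ∧ a ≠ x) ∨ (a ≠ x ∧ b ≠ x ∧ r a b),
    hr0asym, ?_, ?_, ?_, hmaxne, ?_, fun y hy => Or.inl ⟨rfl, hy⟩⟩
  · rintro a b (⟨rfl, ha⟩ | ⟨ha, hb, hab⟩)
    · rintro (⟨rfl, _⟩ | ⟨_, hb, _⟩) <;> simp_all
    · rintro (⟨rfl, _⟩ | ⟨_, _, hba⟩)
      · exact ha rfl
      · exact hasym _ _ hab hba
  · rintro a b c (⟨rfl, ha⟩ | ⟨ha, hb, hab⟩) (⟨rfl, hb'⟩ | ⟨hb', hc, hbc⟩)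
    · exact absurd rfl hb'
    · exact absurd rfl hb'
    · exact Or.inl ⟨rfl, ha⟩
    · exact Or.inr ⟨ha, hc, htrans hab hbc⟩
  · intro a b hab
    by_cases hb : b = x
    · exact Or.inl (Or.inl ⟨hb, fun ha => hab (ha.trans hb.symm)⟩)
    by_cases ha : a = x
    · exact Or.inr (Or.inl ⟨ha, hb⟩)
    rcases htotal a b hab with h | h
    · exact Or.inl (Or.inr ⟨ha, hb, h⟩)
    · exact Or.inr (Or.inr ⟨hb, ha, h⟩)
  · intro B hB
    obtain ⟨h1, h2, h3⟩ := hrat B hB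
    refine ⟨h1, h2, fun y hy hy2 hy3 => ?_⟩
    by_cases hyx : y = x
    · exact Or.inl ⟨hyx, hnever B hB⟩
    · exact Or.inr ⟨hnever B hB, hyx, h3 y hy hy2 hy3⟩
end

section
/- If a data set is rationalizable by a strict linear order ≻ alone (rational choice), then for each of the models LA (attention filters), LC (competition filters), RSM (asymmetric binary filters), and for any strict linear order ≻' on X whatsoever, there exists a filter F in the respective model such that (≻', F) rationalizes the data; hence the revealed preference relation of each model on rational data is empty. (It suffices to prove: for any strict linear order ≻' , the filter F(B) = {c(B)} on data menus, suitably extended by a strict linear order, lies in each model class.) -/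
/-- In a finite nonempty set, an asymmetric transitive relation has a maximal
element. -/
lemma exists_maximal_aux {X : Type*} [DecidableEq X] (r : X → X → Prop)
    (hasym : ∀ a b, r a b → ¬ r b a) (htrans : Transitive r) :
    ∀ B : Finset X, B.Nonempty → ∃ m ∈ B, ∀ y ∈ B, ¬ r y m := by
  intro B
  induction B using Finset.induction_on with
  | empty => intro h; exact absurd h (by simp)
  | @insert a B ha ih =>
    intro _
    rcases B.eq_empty_or_nonempty with hB | hB
    · subst hB
      refine ⟨a, by simp, ?_⟩
      intro y hy
      simp only [Finset.mem_insert, Finset.notMem_empty, or_false] at hy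
      subst hy
      exact fun h => hasym y y h h
    · obtain ⟨m, hm, hmax⟩ := ih hB
      by_cases hr : r a m
      · refine ⟨a, Finset.mem_insert_self a B, ?_⟩
        intro y hy hya
        rcases Finset.mem_insert.mp hy with rfl | hy
        · exact hasym y y hya hya
        · exact hmax y hy (htrans hya hr)
      · refine ⟨m, Finset.mem_insert_of_mem hm, ?_⟩
        intro y hy hym
        rcases Finset.mem_insert.mp hy with rfl | hy
        · exact hr hym
        · exact hmax y hy hym
/-- If the data is rationalizable by a strict linear order, then
for any strict linear order ≻' there is a single filter — simultaneously an
attention filter, a competition filter, and the maximal-element filter of an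
asymmetric relation — such that (≻', F) rationalizes the data. Hence the
revealed preference of LA, LC and RSM on rational data is empty. -/
theorem stmt_19 {X : Type*} [Fintype X] [DecidableEq X]
    (𝓑 : Set (Finset X)) (c : Finset X → X) (r : X → X → Prop)
    (hcard : ∀ B ∈ 𝓑, 2 ≤ B.card)
    (hmem : ∀ B ∈ 𝓑, c B ∈ B)
    (hasym : ∀ a b, r a b → ¬ r b a)
    (htrans : Transitive r)
    (htotal : ∀ a b : X, a ≠ b → r a b ∨ r b a)
    (hmax : ∀ B ∈ 𝓑, ∀ y ∈ B, y ≠ c B → r (c B) y)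
    (r' : X → X → Prop)
    (h'asym : ∀ a b, r' a b → ¬ r' b a)
    (h'trans : Transitive r')
    (h'total : ∀ a b : X, a ≠ b → r' a b ∨ r' b a) :
    ∃ F : Finset X → Finset X,
      (∀ B : Finset X, F B ⊆ B) ∧
      (∀ (B : Finset X) (x : X), x ∈ B → x ∉ F B → F (B.erase x) = F B) ∧
      (∀ B B' : Finset X, B' ⊆ B → F B ∩ B' ⊆ F B') ∧
      (∃ r0 : X → X → Prop, (∀ a b, r0 a b → ¬ r0 b a) ∧
        ∀ B : Finset X, B.Nonempty →
          ∀ w : X, w ∈ F B ↔ w ∈ B ∧ ∀ y ∈ B, ¬ r0 y w) ∧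
      (∀ B ∈ 𝓑, c B ∈ F B ∧ ∀ y ∈ F B, y ≠ c B → r' (c B) y) := by
  classical
  set F : Finset X → Finset X :=
    fun B => B.filter (fun x => ∀ y ∈ B, y ≠ x → r x y) with hF
  have hmemF : ∀ (B : Finset X) (x : X),
      x ∈ F B ↔ x ∈ B ∧ ∀ y ∈ B, y ≠ x → r x y := by
    intro B x; simp [hF]
  have hsub : ∀ B : Finset X, F B ⊆ B := by
    intro B x hx; exact ((hmemF B x).mp hx).1
  -- uniqueness of max
  have huniq : ∀ (B : Finset X) (x y : X), x ∈ F B → y ∈ F B → x = y := by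
    intro B x y hx hy
    obtain ⟨hxB, hxm⟩ := (hmemF B x).mp hx
    obtain ⟨hyB, hym⟩ := (hmemF B y).mp hy
    by_contra hne
    exact hasym _ _ (hxm y hyB (Ne.symm hne)) (hym x hxB hne)
  refine ⟨F, hsub, ?_, ?_, ?_, ?_⟩
  · -- LA
    intro B x hxB hxF
    obtain ⟨m, hmB, hmmax⟩ := exists_maximal_aux r hasym htrans B ⟨x, hxB⟩
    have hmfull : ∀ y ∈ B, y ≠ m → r m y := by
      intro y hy hne
      rcases htotal m y (Ne.symm hne) with h | h
      · exact h
      · exact absurd h (hmmax y hy)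
    have hmF : m ∈ F B := (hmemF B m).mpr ⟨hmB, hmfull⟩
    have hmx : m ≠ x := fun h => hxF (h ▸ hmF)
    apply Finset.Subset.antisymm
    · intro z hz
      obtain ⟨hzB, hzm⟩ := (hmemF _ z).mp hz
      have hzB' : z ∈ B := Finset.mem_of_mem_erase hzB
      have hzm' : z = m := by
        by_contra hne
        have hmE : m ∈ B.erase x := Finset.mem_erase.mpr ⟨hmx, hmB⟩
        exact hasym _ _ (hzm m hmE (Ne.symm hne)) (hmfull z hzB' hne)
      subst hzm'
      exact hmF
    · intro z hz
      have hzm : z = m := huniq B z m hz hmF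
      subst hzm
      refine (hmemF _ z).mpr ⟨Finset.mem_erase.mpr ⟨hmx, hmB⟩, ?_⟩
      intro y hy hne
      exact hmfull y (Finset.mem_of_mem_erase hy) hne
  · -- LC
    intro B B' hBB' x hx
    obtain ⟨hxF, hxB'⟩ := Finset.mem_inter.mp hx
    obtain ⟨hxB, hxm⟩ := (hmemF B x).mp hxF
    exact (hmemF B' x).mpr ⟨hxB', fun y hy hne => hxm y (hBB' hy) hne⟩
  · -- RSM
    refine ⟨r, hasym, ?_⟩
    intro B _ w
    rw [hmemF]
    constructor
    · rintro ⟨hwB, hwm⟩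
      refine ⟨hwB, fun y hy hry => ?_⟩
      have hne : y ≠ w := fun h => hasym w w (h ▸ hry) (h ▸ hry)
      exact hasym _ _ (hwm y hy hne) hry
    · rintro ⟨hwB, hwm⟩
      refine ⟨hwB, fun y hy hne => ?_⟩
      rcases htotal w y hne.symm with h | h
      · exact h
      · exact absurd h (hwm y hy)
  · -- rationalization
    intro B hB
    have hcF : c B ∈ F B :=
      (hmemF B (c B)).mpr ⟨hmem B hB, hmax B hB⟩
    exact ⟨hcF, fun y hy hne => absurd (huniq B y (c B) hy hcF) hne⟩
end
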